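/- arXiv:2004.07323 — 2 statements merged into one kernel-verified Lean document; each statement's English description precedes it below -/
import Mathlib

section
/- Let s > 0 and let x, y ∈ ℝ² with x ≠ y, and let [x, y] denote the closed line segment joining x and y. If E = B([x, y], s), then σ(E, s) = λ(E, s). -/
open MeasureTheory Set Metric Filter ENNReal

/-- The closed `s`-neighborhood of a set `A ⊆ ℝⁿ`. -/
noncomputable def closedNbhd {n : ℕ} (A : Set (EuclideanSpace ℝ (Fin n))) (s : ℝ) :
    Set (EuclideanSpace ℝ (Fin n)) :=
  {x | Metric.infDist x A ≤ s}

/-- The `s`-maximum distance length `λ(E, s)`. -/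
noncomputable def mdLength {n : ℕ} (E : Set (EuclideanSpace ℝ (Fin n))) (s : ℝ) : ℝ≥0∞ :=
  ⨅ (K : Set (EuclideanSpace ℝ (Fin n))) (_ : K.Nonempty) (_ : IsCompact K)
    (_ : IsConnected K) (_ : E ⊆ closedNbhd K s), μH[1] K

/-- The Steiner length `St(X)` of a set `X ⊆ ℝⁿ`. -/
noncomputable def steinerLength {n : ℕ} (X : Set (EuclideanSpace ℝ (Fin n))) : ℝ≥0∞ :=
  ⨅ (S : Set (EuclideanSpace ℝ (Fin n))) (_ : IsCompact S) (_ : IsConnected S)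
    (_ : X ⊆ S), μH[1] S

/-- The `s`-spanning length `σ(E, s)`. -/
noncomputable def spanLength {n : ℕ} (E : Set (EuclideanSpace ℝ (Fin n))) (s : ℝ) : ℝ≥0∞ :=
  ⨅ (X : Set (EuclideanSpace ℝ (Fin n))) (_ : X.Finite) (_ : X.Nonempty)
    (_ : E ⊆ closedNbhd X s), steinerLength X

/-!
Always `λ ≤ σ`: a Steiner tree of a finite `X` with `E ⊆ B(X, s)` is admissible for `λ`.
For the segment both equal `|x - y|`.

Lower bound: `E` contains the two points at distance `s` beyond the ends of `[x, y]`, which are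
`|x - y| + 2s` apart, and a connected `K` coming within `s` of both has length at least `|x - y|`.

Upper bound: take the comb made of `[x, y]` and `N` perpendicular teeth of length `2ε` centred at
`x + (i/N)(y - x)`, `i < N`. If `(|x - y|/N)² ≤ sε` and `2ε ≤ s`, the tips of the teeth together
with `x` and `y` form an `s`-net of `E`: a point of `E` at height `b` over the segment and at
horizontal distance `δ ≤ |x - y|/N` beyond a tooth is within `s` of that tooth's tip on its side,
as `δ² + (|b| - ε)² ≤ sε + (s - ε)² ≤ s²`; points of `E` beyond the ends are within `s` of `x`
or `y`. With `ε = (|x - y|/N)² / s` the teeth have total length `2|x - y|²/(sN) → 0`.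
-/

open scoped RealInnerProductSpace Topology EuclideanSpace

theorem ofReal_dist_le_hausdorffMeasure {X : Type*} [MetricSpace X] [MeasurableSpace X]
    [BorelSpace X] {K : Set X} (hK : IsPreconnected K) {a b : X} (ha : a ∈ K) (hb : b ∈ K) :
    ENNReal.ofReal (dist a b) ≤ μH[1] K := by
  have hlip : LipschitzWith 1 (dist · b) := LipschitzWith.dist_left b
  have hIcc : Icc 0 (dist a b) ⊆ (dist · b) '' K :=
    (hK.image _ hlip.continuous.continuousOn).Icc_subset ⟨b, hb, dist_self b⟩ ⟨a, ha, rfl⟩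
  calc ENNReal.ofReal (dist a b) = μH[1] (Icc 0 (dist a b)) := by
        rw [hausdorffMeasure_real, Real.volume_Icc, sub_zero]
    _ ≤ μH[1] ((dist · b) '' K) := measure_mono hIcc
    _ ≤ μH[1] K := by simpa using hlip.hausdorffMeasure_image_le zero_le_one K

theorem IsCompact.exists_mem_dist_le_of_infDist_le {X : Type*} [MetricSpace X] {K : Set X}
    (hK : IsCompact K) (hne : K.Nonempty) {p : X} {s : ℝ} (hp : infDist p K ≤ s) :
    ∃ k ∈ K, dist p k ≤ s := by
  obtain ⟨k, hk, hpk⟩ := hK.exists_infDist_eq_dist hne p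
  exact ⟨k, hk, hpk ▸ hp⟩

theorem IsConnected.union_iUnion {X ι : Type*} [TopologicalSpace X] {s : Set X} {t : ι → Set X}
    (hs : IsConnected s) (ht : ∀ i, IsPreconnected (t i)) (hst : ∀ i, (s ∩ t i).Nonempty) :
    IsConnected (s ∪ ⋃ i, t i) := by
  obtain ⟨x, hx⟩ := hs.nonempty
  refine ⟨⟨x, .inl hx⟩, isPreconnected_of_forall x fun y hy => ?_⟩
  rcases hy with hy | hy
  · exact ⟨s, subset_union_left, hx, hy, hs.isPreconnected⟩
  · obtain ⟨i, hi⟩ := mem_iUnion.1 hy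
    exact ⟨s ∪ t i, union_subset_union_right _ (subset_iUnion t i), .inl hx, .inr hi,
      hs.isPreconnected.union' (hst i) (ht i)⟩

theorem exists_norm_eq_one_smul_eq {V : Type*} [NormedAddCommGroup V] [NormedSpace ℝ V]
    [Nontrivial V] (w : V) : ∃ u : V, ‖u‖ = 1 ∧ ‖w‖ • u = w := by
  rcases eq_or_ne w 0 with rfl | hw
  · obtain ⟨u, hu⟩ := exists_norm_eq V zero_le_one
    exact ⟨u, hu, by simp⟩
  · refine ⟨‖w‖⁻¹ • w, ?_, ?_⟩
    · rw [norm_smul, norm_inv, norm_norm, inv_mul_cancel₀ (norm_ne_zero_iff.2 hw)]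
    · rw [smul_smul, mul_inv_cancel₀ (norm_ne_zero_iff.2 hw), one_smul]

theorem isCompact_segment {F : Type*} [NormedAddCommGroup F] [NormedSpace ℝ F] (x y : F) :
    IsCompact (segment ℝ x y) :=
  convexHull_pair (𝕜 := ℝ) x y ▸ (toFinite {x, y}).isCompact_convexHull ℝ

theorem exists_nat_lt_mul_div_le {a d : ℝ} {N : ℕ} (hN : 0 < N) (ha : 0 ≤ a) (had : a < d) :
    ∃ i < N, i * d / N ≤ a ∧ a - i * d / N ≤ d / N := by
  have hd : 0 < d := ha.trans_lt had
  have hN' : (0 : ℝ) < N := by exact_mod_cast hN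
  set i := ⌊a * N / d⌋₊
  have hi_le : (i : ℝ) ≤ a * N / d := Nat.floor_le (by positivity)
  have hi_gt : a * N / d < i + 1 := Nat.lt_floor_add_one _
  rw [le_div_iff₀ hd] at hi_le
  rw [div_lt_iff₀ hd] at hi_gt
  refine ⟨i, ?_, ?_, ?_⟩
  · exact_mod_cast (show (i : ℝ) < N by nlinarith)
  · rw [div_le_iff₀ hN']; linarith
  · rw [sub_le_iff_le_add, ← add_div, le_div_iff₀ hN']; linarith

theorem sq_add_sq_abs_sub_le {δ b s ε : ℝ} (hδ : δ ^ 2 ≤ s * ε) (hε : 0 ≤ ε) (hεs : 2 * ε ≤ s)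
    (hb : |b| ≤ s) : δ ^ 2 + (|b| - ε) ^ 2 ≤ s ^ 2 := by
  have : (|b| - ε) ^ 2 ≤ (s - ε) ^ 2 := by nlinarith [abs_nonneg b]
  nlinarith

theorem exists_comb_sq_add_sq_le {a b c d s ε : ℝ} {N : ℕ} (hN : 0 < N) (hc : c ∈ Icc 0 d)
    (hε : 0 ≤ ε) (hεs : 2 * ε ≤ s) (hmesh : (d / N) ^ 2 ≤ s * ε)
    (h : (a - c) ^ 2 + b ^ 2 ≤ s ^ 2) :
    a ^ 2 + b ^ 2 ≤ s ^ 2 ∨ (a - d) ^ 2 + b ^ 2 ≤ s ^ 2 ∨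
      ∃ i < N, ∃ e ∈ ({ε, -ε} : Set ℝ), (a - i * d / N) ^ 2 + (b - e) ^ 2 ≤ s ^ 2 := by
  obtain ⟨hc0, hcd⟩ := hc
  rcases le_or_gt a 0 with ha | ha
  · left; nlinarith
  rcases le_or_gt d a with hda | hda
  · right; left; nlinarith
  right; right
  obtain ⟨i, hiN, hi, hgap⟩ := exists_nat_lt_mul_div_le hN ha.le hda
  have hδ : (a - i * d / N) ^ 2 ≤ s * ε :=
    (pow_le_pow_left₀ (by linarith) hgap 2).trans hmesh
  have hb : |b| ≤ s := abs_le_of_sq_le_sq (by nlinarith) (by linarith)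
  have key := sq_add_sq_abs_sub_le hδ hε hεs hb
  rcases le_or_gt 0 b with hb0 | hb0
  · exact ⟨i, hiN, ε, by simp, by rwa [abs_of_nonneg hb0] at key⟩
  · refine ⟨i, hiN, -ε, by simp, ?_⟩
    rw [abs_of_neg hb0] at key
    nlinarith

section Plane

variable {V : Type*} [NormedAddCommGroup V] [InnerProductSpace ℝ V] [Fact (Module.finrank ℝ V = 2)]
  (o : Orientation ℝ V (Fin 2))

theorem Orientation.dist_add_smul_add_smul_rightAngleRotation {u : V} (hu : ‖u‖ = 1)
    (x p : V) (c e : ℝ) :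
    dist p (x + c • u + e • o.rightAngleRotation u) =
      √((⟪u, p - x⟫ - c) ^ 2 + (o.areaForm u (p - x) - e) ^ 2) := by
  rw [dist_eq_norm, show p - (x + c • u + e • o.rightAngleRotation u) =
    p - x - c • u - e • o.rightAngleRotation u by abel]
  generalize p - x = z
  have h := o.inner_sq_add_areaForm_sq u (z - c • u - e • o.rightAngleRotation u)
  simp only [inner_sub_right, inner_smul_right, map_sub, map_smul, smul_eq_mul,
    real_inner_self_eq_norm_sq, o.inner_rightAngleRotation_right, o.areaForm_apply_self,
    o.areaForm_rightAngleRotation_right, hu] at h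
  rw [← Real.sqrt_sq (norm_nonneg _)]
  congr 1
  linarith

theorem Orientation.exists_mem_dist_le_of_comb {u : V} (hu : ‖u‖ = 1) {x p : V} {X : Set V}
    {c d s ε : ℝ} {N : ℕ} (hN : 0 < N) (hx : x ∈ X) (hy : x + d • u ∈ X)
    (hteeth : ∀ i < N, ∀ e ∈ ({ε, -ε} : Set ℝ),
      x + (i * d / N) • u + e • o.rightAngleRotation u ∈ X)
    (hc : c ∈ Icc 0 d) (hε : 0 ≤ ε) (hεs : 2 * ε ≤ s) (hmesh : (d / N) ^ 2 ≤ s * ε)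
    (hp : dist p (x + c • u) ≤ s) : ∃ ξ ∈ X, dist p ξ ≤ s := by
  have hdist : ∀ c e, dist p (x + c • u + e • o.rightAngleRotation u) ≤ s ↔
      (⟪u, p - x⟫ - c) ^ 2 + (o.areaForm u (p - x) - e) ^ 2 ≤ s ^ 2 := fun c e => by
    rw [o.dist_add_smul_add_smul_rightAngleRotation hu, Real.sqrt_le_iff,
      and_iff_right (by linarith)]
  have hdist₀ : ∀ c, dist p (x + c • u) ≤ s ↔
      (⟪u, p - x⟫ - c) ^ 2 + o.areaForm u (p - x) ^ 2 ≤ s ^ 2 := fun c => by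
    simpa using hdist c 0
  rcases exists_comb_sq_add_sq_le hN hc hε hεs hmesh ((hdist₀ c).1 hp)
    with h | h | ⟨i, hi, e, he, h⟩
  · exact ⟨x, hx, by simpa using (hdist₀ 0).2 (by simpa using h)⟩
  · exact ⟨_, hy, (hdist₀ d).2 h⟩
  · exact ⟨_, hteeth i hi e he, (hdist _ e).2 h⟩

end Plane

section Lengths

variable {n : ℕ}

theorem mdLength_le_hausdorffMeasure {E K : Set (EuclideanSpace ℝ (Fin n))} {s : ℝ}
    (hne : K.Nonempty) (hc : IsCompact K) (hconn : IsConnected K) (hE : E ⊆ closedNbhd K s) :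
    mdLength E s ≤ μH[1] K :=
  iInf_le_of_le K <| iInf_le_of_le hne <| iInf_le_of_le hc <| iInf_le_of_le hconn <| iInf_le _ hE

theorem spanLength_le_steinerLength {E X : Set (EuclideanSpace ℝ (Fin n))} {s : ℝ}
    (hX : X.Finite) (hne : X.Nonempty) (hE : E ⊆ closedNbhd X s) :
    spanLength E s ≤ steinerLength X :=
  iInf_le_of_le X <| iInf_le_of_le hX <| iInf_le_of_le hne <| iInf_le _ hE

theorem steinerLength_le_hausdorffMeasure {X S : Set (EuclideanSpace ℝ (Fin n))}
    (hc : IsCompact S) (hconn : IsConnected S) (hXS : X ⊆ S) : steinerLength X ≤ μH[1] S :=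
  iInf_le_of_le S <| iInf_le_of_le hc <| iInf_le_of_le hconn <| iInf_le _ hXS

theorem mdLength_le_spanLength (E : Set (EuclideanSpace ℝ (Fin n))) (s : ℝ) :
    mdLength E s ≤ spanLength E s := by
  simp only [spanLength, steinerLength, le_iInf_iff]
  intro X _ hne hEX S hc hconn hXS
  exact mdLength_le_hausdorffMeasure (hne.mono hXS) hc hconn fun p hp =>
    (infDist_le_infDist_of_subset hXS hne).trans (hEX hp)

theorem ofReal_dist_sub_le_mdLength {E : Set (EuclideanSpace ℝ (Fin n))} {s : ℝ} {p q}
    (hp : p ∈ E) (hq : q ∈ E) : ENNReal.ofReal (dist p q - 2 * s) ≤ mdLength E s := by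
  simp only [mdLength, le_iInf_iff]
  intro K hne hc hconn hE
  obtain ⟨k, hk, hpk⟩ := hc.exists_mem_dist_le_of_infDist_le hne (hE hp)
  obtain ⟨l, hl, hql⟩ := hc.exists_mem_dist_le_of_infDist_le hne (hE hq)
  refine (ENNReal.ofReal_le_ofReal ?_).trans
    (ofReal_dist_le_hausdorffMeasure hconn.isPreconnected hk hl)
  linarith [dist_triangle4 p k l q, dist_comm q l]

theorem steinerLength_union_iUnion_le {ι : Type*} [Fintype ι]
    (x y : EuclideanSpace ℝ (Fin n)) (a b : ι → EuclideanSpace ℝ (Fin n))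
    (hab : ∀ i, (segment ℝ x y ∩ segment ℝ (a i) (b i)).Nonempty) :
    steinerLength ({x, y} ∪ ⋃ i, {a i, b i}) ≤ edist x y + ∑ i, edist (a i) (b i) := by
  have hsub : {x, y} ∪ ⋃ i, {a i, b i} ⊆ segment ℝ x y ∪ ⋃ i, segment ℝ (a i) (b i) :=
    union_subset_union (pair_subset (left_mem_segment ℝ x y) (right_mem_segment ℝ x y))
      (iUnion_mono fun i => pair_subset (left_mem_segment ℝ _ _) (right_mem_segment ℝ _ _))
  calc _ ≤ μH[1] (segment ℝ x y ∪ ⋃ i, segment ℝ (a i) (b i)) :=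
        steinerLength_le_hausdorffMeasure
          ((isCompact_segment x y).union (isCompact_iUnion fun i => isCompact_segment _ _))
          ((convex_segment x y).isConnected ⟨x, left_mem_segment ℝ x y⟩ |>.union_iUnion
            (fun i => (convex_segment _ _).isPreconnected) hab) hsub
    _ ≤ μH[1] (segment ℝ x y) + ∑ i, μH[1] (segment ℝ (a i) (b i)) :=
        (measure_union_le _ _).trans (add_le_add le_rfl (measure_iUnion_fintype_le _ _))
    _ = _ := by simp only [hausdorffMeasure_segment]

theorem ofReal_dist_le_mdLength_closedNbhd_segment [NeZero n] {s : ℝ} (hs : 0 ≤ s)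
    (x y : EuclideanSpace ℝ (Fin n)) :
    ENNReal.ofReal (dist x y) ≤ mdLength (closedNbhd (segment ℝ x y) s) s := by
  obtain ⟨u, hu, hyx⟩ := exists_norm_eq_one_smul_eq (y - x)
  have hdu : dist x y • u = y - x := by rw [dist_comm, dist_eq_norm, hyx]
  have hsu : ‖s • u‖ = s := by rw [norm_smul, hu, mul_one, Real.norm_of_nonneg hs]
  have hp : x - s • u ∈ closedNbhd (segment ℝ x y) s :=
    (infDist_le_dist_of_mem (left_mem_segment ℝ x y)).trans (by rw [dist_self_sub_left, hsu])
  have hq : y + s • u ∈ closedNbhd (segment ℝ x y) s :=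
    (infDist_le_dist_of_mem (right_mem_segment ℝ x y)).trans (by rw [dist_self_add_left, hsu])
  have hpq : dist (x - s • u) (y + s • u) = dist x y + 2 * s := by
    rw [dist_comm, dist_eq_norm,
      show y + s • u - (x - s • u) = (dist x y + 2 * s) • u by rw [add_smul, hdu]; module,
      norm_smul, hu, mul_one, Real.norm_of_nonneg (by positivity)]
  simpa [hpq] using ofReal_dist_sub_le_mdLength (s := s) hp hq

end Lengths

theorem spanLength_closedNbhd_segment_le_of_mesh {s ε : ℝ} (x y : EuclideanSpace ℝ (Fin 2))
    {N : ℕ} (hN : 0 < N) (hε : 0 ≤ ε) (hεs : 2 * ε ≤ s) (hmesh : (dist x y / N) ^ 2 ≤ s * ε) :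
    spanLength (closedNbhd (segment ℝ x y) s) s ≤ ENNReal.ofReal (dist x y + N * (2 * ε)) := by
  obtain ⟨u, hu, hyx⟩ := exists_norm_eq_one_smul_eq (y - x)
  have hdu : dist x y • u = y - x := by rw [dist_comm, dist_eq_norm, hyx]
  set J := (EuclideanSpace.basisFun (Fin 2) ℝ).toBasis.orientation.rightAngleRotation
  set c : Fin N → EuclideanSpace ℝ (Fin 2) := fun i => x + ((i : ℕ) * dist x y / N) • u
  set a := fun i => c i + ε • J u
  set b := fun i => c i + (-ε) • J u
  set X := {x, y} ∪ ⋃ i, {a i, b i}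
  have hc_mem : ∀ i, c i ∈ segment ℝ x y := fun i => by
    rw [segment_eq_image']
    refine ⟨(i : ℕ) / N, ⟨by positivity, div_le_one_of_le₀ (mod_cast i.is_lt.le) (by positivity)⟩,
      ?_⟩
    simp only [c, ← hdu, smul_smul]
    ring_nf
  have hc_mid : ∀ i, c i ∈ segment ℝ (a i) (b i) := fun i =>
    ⟨1 / 2, 1 / 2, by norm_num, by norm_num, by norm_num, by simp only [a, b]; module⟩
  have hcover : closedNbhd (segment ℝ x y) s ⊆ closedNbhd X s := by
    intro p hp
    obtain ⟨q, hq, hpq⟩ := (isCompact_segment x y).exists_mem_dist_le_of_infDist_le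
      ⟨x, left_mem_segment ℝ x y⟩ hp
    rw [segment_eq_image'] at hq
    obtain ⟨t, ⟨ht0, ht1⟩, rfl⟩ := hq
    have hteeth : ∀ i < N, ∀ e ∈ ({ε, -ε} : Set ℝ),
        x + (i * dist x y / N) • u + e • J u ∈ X := by
      rintro i hi e (rfl | rfl)
      exacts [.inr (mem_iUnion.2 ⟨⟨i, hi⟩, mem_insert _ _⟩),
        .inr (mem_iUnion.2 ⟨⟨i, hi⟩, mem_insert_of_mem _ rfl⟩)]
    obtain ⟨ξ, hξ, hpξ⟩ := Orientation.exists_mem_dist_le_of_comb _ hu hN (.inl (mem_insert x _))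
      (by rw [hdu, add_sub_cancel]; exact .inl (mem_insert_of_mem x rfl)) hteeth
      ⟨mul_nonneg ht0 dist_nonneg, mul_le_of_le_one_left dist_nonneg ht1⟩ hε hεs hmesh
      (by rwa [mul_smul, hdu])
    exact (infDist_le_dist_of_mem hξ).trans hpξ
  have hab : ∀ i, edist (a i) (b i) = ENNReal.ofReal (2 * ε) := fun i => by
    rw [edist_dist, dist_eq_norm, show a i - b i = (2 * ε) • J u by simp only [a, b]; module,
      norm_smul, LinearIsometryEquiv.norm_map, hu, mul_one, Real.norm_of_nonneg (by positivity)]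
  calc spanLength (closedNbhd (segment ℝ x y) s) s
      ≤ steinerLength X :=
        spanLength_le_steinerLength ((toFinite _).union (finite_iUnion fun i => toFinite _))
          ⟨x, .inl (mem_insert x _)⟩ hcover
    _ ≤ edist x y + ∑ i, edist (a i) (b i) :=
        steinerLength_union_iUnion_le x y a b fun i => ⟨c i, hc_mem i, hc_mid i⟩
    _ = ENNReal.ofReal (dist x y + N * (2 * ε)) := by
        simp only [hab, Finset.sum_const, Finset.card_univ, Fintype.card_fin, nsmul_eq_mul,
          edist_dist]
        rw [ENNReal.ofReal_add dist_nonneg (by positivity), ENNReal.ofReal_mul (Nat.cast_nonneg N),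
          ENNReal.ofReal_natCast]

theorem spanLength_closedNbhd_segment_le {s : ℝ} (hs : 0 < s) (x y : EuclideanSpace ℝ (Fin 2)) :
    spanLength (closedNbhd (segment ℝ x y) s) s ≤ ENNReal.ofReal (dist x y) := by
  set ε : ℕ → ℝ := fun N => (dist x y / N) ^ 2 / s
  have hε : Tendsto ε atTop (𝓝 0) := by
    simpa using ((tendsto_const_div_atTop_nhds_zero_nat (dist x y)).pow 2).div_const s
  have hlen : Tendsto (fun N : ℕ => dist x y + N * (2 * ε N)) atTop (𝓝 (dist x y)) := by
    have h : ∀ N : ℕ, N * (2 * ε N) = 2 * dist x y ^ 2 / s / N := fun N => by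
      rcases N.eq_zero_or_pos with rfl | hN
      · simp
      · simp only [ε]
        field_simp
    simpa [h] using
      (tendsto_const_div_atTop_nhds_zero_nat (2 * dist x y ^ 2 / s)).const_add (dist x y)
  refine ge_of_tendsto (ENNReal.tendsto_ofReal hlen) ?_
  filter_upwards [eventually_gt_atTop 0, hε.eventually (eventually_le_nhds (half_pos hs))]
    with N hN hεN
  exact spanLength_closedNbhd_segment_le_of_mesh x y hN (by positivity) (by linarith)
    (mul_div_cancel₀ _ hs.ne').ge

theorem spanLength_eq_mdLength_of_segment_general
    (s : ℝ) (hs : 0 < s) (x y : EuclideanSpace ℝ (Fin 2))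
    (E : Set (EuclideanSpace ℝ (Fin 2))) (hE : E = closedNbhd (segment ℝ x y) s) :
    spanLength E s = mdLength E s := by
  subst hE
  exact le_antisymm
    ((spanLength_closedNbhd_segment_le hs x y).trans
      (ofReal_dist_le_mdLength_closedNbhd_segment hs.le x y))
    (mdLength_le_spanLength _ _)

/-- For `E` the closed `s`-neighborhood of a nondegenerate line segment,
`σ(E, s) = λ(E, s)`. -/
theorem spanLength_eq_mdLength_of_segment
    (s : ℝ) (hs : 0 < s) (x y : EuclideanSpace ℝ (Fin 2)) (hxy : x ≠ y)
    (E : Set (EuclideanSpace ℝ (Fin 2))) (hE : E = closedNbhd (segment ℝ x y) s) :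
    spanLength E s = mdLength E s :=
  spanLength_eq_mdLength_of_segment_general s hs x y E hE
end

section
/- Let c ∈ ℝ², r > 0, and s > 0 with 3r ≤ s. Let Y := {c + (2r, 0), c − (2r, 0), c + (0, 2r), c − (0, 2r)}. Then the closed ball B(c, r + s) is contained in B(Y, s); equivalently, B(B(c, r), s) ⊆ B(Y, s). -/
/-!
Write a point of `B(c, r + s)` as `c + (a, b)` and suppose `|b| ≤ a`, the other three cases being
symmetric. Then the spoke `c + (2r, 0)` is within `s` of it: `(a - 2r)² + b² ≤ s²` follows from
`a² + b² ≤ (r + s)²`, `b² ≤ a²` and `3r ≤ s`. The second inclusion reduces to the first because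
`B(B(c, r), s) ⊆ B(c, r + s)` by the triangle inequality.
-/

open MeasureTheory Set Metric Filter ENNReal

/-- The point of `ℝ²` with coordinates `(a, b)`. -/
noncomputable def pt (a b : ℝ) : EuclideanSpace ℝ (Fin 2) :=
  (WithLp.equiv 2 (Fin 2 → ℝ)).symm ![a, b]

lemma mem_closedNbhd_of_dist_le {n : ℕ} {A : Set (EuclideanSpace ℝ (Fin n))} {s : ℝ}
    {x p : EuclideanSpace ℝ (Fin n)} (hp : p ∈ A) (hxp : dist x p ≤ s) : x ∈ closedNbhd A s :=
  (infDist_le_dist_of_mem hp).trans hxp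

lemma closedNbhd_closedBall_subset {n : ℕ} {c : EuclideanSpace ℝ (Fin n)} {r : ℝ} (hr : 0 ≤ r)
    (s : ℝ) : closedNbhd (closedBall c r) s ⊆ closedBall c (r + s) := by
  intro x hx
  have hlow : dist x c - r ≤ infDist x (closedBall c r) :=
    (le_infDist (nonempty_closedBall.2 hr)).2 fun y hy => by
      linarith [dist_triangle x y c, mem_closedBall.1 hy]
  rw [mem_closedBall]
  linarith [show infDist x (closedBall c r) ≤ s from hx]

@[simp] lemma pt_apply_zero (a b : ℝ) : pt a b 0 = a := rfl

@[simp] lemma pt_apply_one (a b : ℝ) : pt a b 1 = b := rfl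

lemma dist_sq_eq_fin_two (x y : EuclideanSpace ℝ (Fin 2)) :
    dist x y ^ 2 = (x 0 - y 0) ^ 2 + (x 1 - y 1) ^ 2 := by
  simp [EuclideanSpace.dist_sq_eq, Fin.sum_univ_two, Real.dist_eq, sq_abs]

lemma dist_le_of_sq_add_sq_le {x y : EuclideanSpace ℝ (Fin 2)} {s : ℝ} (hs : 0 ≤ s)
    (h : (x 0 - y 0) ^ 2 + (x 1 - y 1) ^ 2 ≤ s ^ 2) : dist x y ≤ s :=
  (sq_le_sq₀ dist_nonneg hs).1 (dist_sq_eq_fin_two x y ▸ h)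

/- For `4a ≥ 5r + 2s` the bound `a² + b² ≤ (r + s)²` already suffices; for smaller `a` use
`b² ≤ a²` and convexity of `2a² - 4ar` on `[0, (5r + 2s)/4]`. -/
lemma sq_sub_two_mul_add_sq_le {a b r s : ℝ} (hr : 0 ≤ r) (hrs : 3 * r ≤ s) (hba : |b| ≤ a)
    (h : a ^ 2 + b ^ 2 ≤ (r + s) ^ 2) : (a - 2 * r) ^ 2 + b ^ 2 ≤ s ^ 2 := by
  have ha : 0 ≤ a := (abs_nonneg b).trans hba
  have hb : b ^ 2 ≤ a ^ 2 := sq_le_sq' (neg_le_of_abs_le hba) (le_of_abs_le hba)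
  rcases le_total (5 * r + 2 * s) (4 * a) with hfar | hnear
  · nlinarith [mul_le_mul_of_nonneg_left hfar hr]
  · nlinarith [mul_nonneg ha (sub_nonneg.2 hnear)]

lemma exists_spoke_dist_le {r s : ℝ} (hr : 0 ≤ r) (hrs : 3 * r ≤ s)
    {c x : EuclideanSpace ℝ (Fin 2)} (hx : dist x c ≤ r + s) :
    ∃ p ∈ ({c + pt (2 * r) 0, c - pt (2 * r) 0, c + pt 0 (2 * r), c - pt 0 (2 * r)} :
      Set (EuclideanSpace ℝ (Fin 2))), dist x p ≤ s := by
  have hs : 0 ≤ s := by linarith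
  have hxc : (x 0 - c 0) ^ 2 + (x 1 - c 1) ^ 2 ≤ (r + s) ^ 2 := by
    rw [← dist_sq_eq_fin_two]
    exact pow_le_pow_left₀ dist_nonneg hx 2
  have key {a b : ℝ} : |b| ≤ a → a ^ 2 + b ^ 2 ≤ (r + s) ^ 2 → (a - 2 * r) ^ 2 + b ^ 2 ≤ s ^ 2 :=
    sq_sub_two_mul_add_sq_le hr hrs
  rcases le_total |x 1 - c 1| |x 0 - c 0| with h | h
  · rcases le_total 0 (x 0 - c 0) with ha | ha
    · refine ⟨c + pt (2 * r) 0, by simp, dist_le_of_sq_add_sq_le hs ?_⟩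
      simp only [PiLp.add_apply, pt_apply_zero, pt_apply_one]
      linear_combination key (h.trans_eq (abs_of_nonneg ha)) hxc
    · refine ⟨c - pt (2 * r) 0, by simp, dist_le_of_sq_add_sq_le hs ?_⟩
      simp only [PiLp.sub_apply, pt_apply_zero, pt_apply_one]
      linear_combination key (h.trans_eq (abs_of_nonpos ha)) (by rwa [neg_sq])
  · rcases le_total 0 (x 1 - c 1) with hb | hb
    · refine ⟨c + pt 0 (2 * r), by simp, dist_le_of_sq_add_sq_le hs ?_⟩
      simp only [PiLp.add_apply, pt_apply_zero, pt_apply_one]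
      linear_combination key (h.trans_eq (abs_of_nonneg hb)) (by rwa [add_comm])
    · refine ⟨c - pt 0 (2 * r), by simp, dist_le_of_sq_add_sq_le hs ?_⟩
      simp only [PiLp.sub_apply, pt_apply_zero, pt_apply_one]
      linear_combination key (h.trans_eq (abs_of_nonpos hb)) (by rwa [neg_sq, add_comm])

theorem spoke_cover_general
    (c : EuclideanSpace ℝ (Fin 2)) (r s : ℝ) (hr : 0 < r)
    (hrs : 3 * r ≤ s)
    (Y : Set (EuclideanSpace ℝ (Fin 2)))
    (hY : Y = ({c + pt (2 * r) 0, c - pt (2 * r) 0, c + pt 0 (2 * r), c - pt 0 (2 * r)} :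
      Set (EuclideanSpace ℝ (Fin 2)))) :
    Metric.closedBall c (r + s) ⊆ closedNbhd Y s ∧
    closedNbhd (Metric.closedBall c r) s ⊆ closedNbhd Y s := by
  have hball : closedBall c (r + s) ⊆ closedNbhd Y s := fun x hx => by
    obtain ⟨p, hp, hxp⟩ := exists_spoke_dist_le hr.le hrs (mem_closedBall.1 hx)
    exact mem_closedNbhd_of_dist_le (hY ▸ hp) hxp
  exact ⟨hball, (closedNbhd_closedBall_subset hr.le s).trans hball⟩

/-- Four `s`-balls centered at the points displaced by `2r` from `c` in the coordinate
directions cover the `(r + s)`-ball: `B(c, r + s) ⊆ B(Y, s)`; equivalently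
`B(B(c, r), s) ⊆ B(Y, s)`. -/
theorem spoke_cover
    (c : EuclideanSpace ℝ (Fin 2)) (r s : ℝ) (hr : 0 < r) (hs : 0 < s)
    (hrs : 3 * r ≤ s)
    (Y : Set (EuclideanSpace ℝ (Fin 2)))
    (hY : Y = ({c + pt (2 * r) 0, c - pt (2 * r) 0, c + pt 0 (2 * r), c - pt 0 (2 * r)} :
      Set (EuclideanSpace ℝ (Fin 2)))) :
    Metric.closedBall c (r + s) ⊆ closedNbhd Y s ∧
    closedNbhd (Metric.closedBall c r) s ⊆ closedNbhd Y s :=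
  spoke_cover_general c r s hr hrs Y hY
end
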